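/- arXiv:0906.0717 — 3 statements merged into one kernel-verified Lean document; each statement's English description precedes it below -/
import Mathlib

section
/- Let t>0, r>0, ρ>0 and θ,ψ∈ℝ with |θ−ψ|<π, and let 0<δ<π−|θ−ψ|. Then the standard planar heat kernel admits the contour integral representation (1/(4πt))·e^{−(r²+ρ²−2rρcos(θ−ψ))/(4t)} = (1/(16π²it))·e^{−(r²+ρ²)/(4t)}·[ ∮_{|α−ψ|=δ} e^{rρcos(α−θ)/(2t)} cot((α−ψ)/2) dα + i∫_{−∞}^{∞} e^{rρcos(θ−π+is−θ)/(2t)} cot((θ−π+is−ψ)/2) ds − i∫_{−∞}^{∞} e^{rρcos(θ+π+is−θ)/(2t)} cot((θ+π+is−ψ)/2) ds ], where the circle is positively oriented; in particular all three integrals converge absolutely. -/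
/-!
The two vertical lines differ by a shift of `2π` and the integrand
`F α = exp (rρ cos (α - θ) / (2t)) * cot ((α - ψ) / 2)` is `2π`-periodic, so the two line
integrals cancel. They converge absolutely because on them `cos (α - θ) = -cosh (Im α)`, while
`cot` is bounded on vertical lines avoiding `πℤ`. What remains is the circle integral, a residue:
`cot ((α - ψ) / 2)` has a simple pole of residue `2` at `ψ`, so by Cauchy's formula the circle
integral is `4πi exp (rρ cos (θ - ψ) / (2t))`, and the prefactor turns this into the heat kernel.
-/

open MeasureTheory Complex Metric
open scoped Real

namespace Complex

theorem cot_periodic : Function.Periodic cot π := fun z => by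
  simp only [cot_eq_cos_div_sin, cos_add_pi, sin_add_pi, neg_div_neg_eq]

theorem measurable_cot : Measurable cot :=
  measurable_cos.div measurable_sin

theorem sin_ne_zero_of_norm_lt_pi {z : ℂ} (hz₀ : z ≠ 0) (hz : ‖z‖ < π) : sin z ≠ 0 := by
  refine sin_ne_zero_iff.2 fun k hk => ?_
  have hk₀ : k ≠ 0 := by rintro rfl; simp [hk] at hz₀
  rw [hk, norm_mul, norm_intCast, norm_real, Real.norm_of_nonneg Real.pi_pos.le] at hz
  have : (1 : ℝ) ≤ |(k : ℝ)| := by exact_mod_cast Int.one_le_abs hk₀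
  nlinarith [Real.pi_pos]

theorem dslope_sin_ne_zero {z : ℂ} (hz : ‖z‖ < π) : dslope sin 0 z ≠ 0 := by
  rcases eq_or_ne z 0 with rfl | hz₀
  · simp [dslope_same]
  · rw [dslope_of_ne _ hz₀, slope_def_field, sub_zero, sin_zero, sub_zero]
    exact div_ne_zero (sin_ne_zero_of_norm_lt_pi hz₀ hz) hz₀

theorem cot_eq_inv_mul_cos_div_dslope_sin {z : ℂ} (hz : z ≠ 0) :
    cot z = z⁻¹ * (cos z / dslope sin 0 z) := by
  rw [dslope_of_ne _ hz, slope_def_field, sub_zero, sin_zero, sub_zero, cot_eq_cos_div_sin]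
  field_simp

theorem abs_sin_re_mul_cosh_im_le_norm_sin (z : ℂ) :
    |Real.sin z.re| * Real.cosh z.im ≤ ‖sin z‖ := by
  have h : sin z =
      ↑(Real.sin z.re * Real.cosh z.im) + ↑(Real.cos z.re * Real.sinh z.im) * I := by
    conv_lhs => rw [← re_add_im z]
    rw [sin_add_mul_I]; push_cast; ring
  rw [h, norm_add_mul_I, Real.le_sqrt (by positivity) (by positivity), mul_pow, sq_abs,
    ← mul_pow]
  nlinarith [sq_nonneg (Real.cos z.re * Real.sinh z.im)]

theorem norm_cos_le_cosh_im (z : ℂ) : ‖cos z‖ ≤ Real.cosh z.im := by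
  have h : cos z =
      ↑(Real.cos z.re * Real.cosh z.im) + ↑(-(Real.sin z.re * Real.sinh z.im)) * I := by
    conv_lhs => rw [← re_add_im z]
    rw [cos_add_mul_I]; push_cast; ring
  rw [h, norm_add_mul_I, Real.sqrt_le_left (Real.cosh_pos _).le]
  nlinarith [Real.sin_sq_add_cos_sq z.re, Real.cosh_sq z.im]

theorem norm_cot_le_inv_abs_sin_re {z : ℂ} (hz : Real.sin z.re ≠ 0) :
    ‖cot z‖ ≤ |Real.sin z.re|⁻¹ := by
  have hpos : 0 < |Real.sin z.re| * Real.cosh z.im := by positivity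
  rw [cot_eq_cos_div_sin, norm_div]
  calc ‖cos z‖ / ‖sin z‖ ≤ Real.cosh z.im / (|Real.sin z.re| * Real.cosh z.im) :=
        div_le_div₀ (Real.cosh_pos _).le (norm_cos_le_cosh_im z) hpos
          (abs_sin_re_mul_cosh_im_le_norm_sin z)
    _ = |Real.sin z.re|⁻¹ := by field_simp [(Real.cosh_pos z.im).ne']

section CotHalfResidue

variable {g : ℂ → ℂ} {c : ℂ} {R : ℝ}

-- `dslope sin 0 w = sin w / w` removes the pole of `cot` at `0` and has no zeros for `‖w‖ < π`.
noncomputable def cotHalfNumerator (g : ℂ → ℂ) (c : ℂ) (z : ℂ) : ℂ :=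
  2 * g z * (cos ((z - c) / 2) / dslope sin 0 ((z - c) / 2))

theorem mul_cot_half_sub_eq_sub_inv_smul {z : ℂ} (hz : z ≠ c) :
    g z * cot ((z - c) / 2) = (z - c)⁻¹ • cotHalfNumerator g c z := by
  have hz' : (z - c) / 2 ≠ 0 := div_ne_zero (sub_ne_zero.2 hz) two_ne_zero
  rw [cot_eq_inv_mul_cos_div_dslope_sin hz', cotHalfNumerator, smul_eq_mul]
  field_simp

theorem differentiableOn_cotHalfNumerator (hg : DifferentiableOn ℂ g (closedBall c R))
    (hR : R < 2 * π) : DifferentiableOn ℂ (cotHalfNumerator g c) (closedBall c R) := by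
  have hdslope : Differentiable ℂ (dslope sin 0) := fun z =>
    ((differentiableOn_dslope Filter.univ_mem).2 differentiable_sin.differentiableOn z
      trivial).differentiableAt Filter.univ_mem
  intro z hz
  have hzR : ‖(z - c) / 2‖ < π := by
    rw [norm_div, RCLike.norm_ofNat, ← dist_eq_norm]
    linarith [mem_closedBall.1 hz]
  refine ((hg z hz).const_mul 2).mul (DifferentiableWithinAt.div ?_ ?_ (dslope_sin_ne_zero hzR))
  · fun_prop
  · exact (hdslope _).comp_differentiableWithinAt z (by fun_prop)

theorem circleIntegrable_mul_cot_half_sub (hg : DifferentiableOn ℂ g (closedBall c R))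
    (hR₀ : 0 < R) (hR : R < 2 * π) :
    CircleIntegrable (fun z => g z * cot ((z - c) / 2)) c R := by
  rw [circleIntegrable_congr fun z hz => mul_cot_half_sub_eq_sub_inv_smul
    (ne_of_mem_sphere hz (abs_pos.2 hR₀.ne').ne')]
  refine ContinuousOn.circleIntegrable hR₀.le (.smul (f := fun z => (z - c)⁻¹) ?_ ?_)
  · exact (continuousOn_id.sub continuousOn_const).inv₀ fun z hz =>
      sub_ne_zero.2 (ne_of_mem_sphere hz hR₀.ne')
  · exact (differentiableOn_cotHalfNumerator hg hR).continuousOn.mono sphere_subset_closedBall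

theorem circleIntegral_mul_cot_half_sub (hg : DifferentiableOn ℂ g (closedBall c R))
    (hR₀ : 0 < R) (hR : R < 2 * π) :
    (∮ z in C(c, R), g z * cot ((z - c) / 2)) = 4 * π * I * g c := by
  rw [circleIntegral.integral_congr hR₀.le fun z hz => mul_cot_half_sub_eq_sub_inv_smul
    (ne_of_mem_sphere hz hR₀.ne'),
    (differentiableOn_cotHalfNumerator hg hR).circleIntegral_sub_inv_smul (mem_ball_self hR₀)]
  simp [cotHalfNumerator, dslope_same]
  ring

end CotHalfResidue

end Complex

namespace Real

theorem sq_div_four_le_cosh (x : ℝ) : x ^ 2 / 4 ≤ cosh x := by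
  have h := quadratic_le_exp_of_nonneg (abs_nonneg x)
  rw [sq_abs] at h
  rw [← cosh_abs, cosh_eq]
  nlinarith [exp_pos (-|x|), abs_nonneg x]

theorem integrable_exp_neg_mul_cosh {a : ℝ} (ha : 0 < a) :
    Integrable fun s : ℝ => exp (-(a * cosh s)) := by
  refine (integrable_exp_neg_mul_sq (by positivity : 0 < a / 4)).mono'
    (by fun_prop : Continuous _).aestronglyMeasurable (.of_forall fun s => ?_)
  rw [norm_of_nonneg (exp_pos _).le, exp_le_exp]
  nlinarith [sq_div_four_le_cosh s]

end Real

theorem integrable_cexp_neg_mul_cosh_mul_cot_half {a x : ℝ} (ha : 0 < a)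
    (hx : Real.sin (x / 2) ≠ 0) :
    Integrable fun s : ℝ => cexp (-(a * cosh s)) * cot ((x + I * s) / 2) := by
  have hexp : (fun s : ℝ => cexp (-(a * cosh s))) =
      fun s => (Real.exp (-(a * Real.cosh s)) : ℂ) := by
    push_cast; rfl
  refine Integrable.mul_bdd (c := |Real.sin (x / 2)|⁻¹)
    (hexp ▸ (Real.integrable_exp_neg_mul_cosh ha).ofReal)
    (measurable_cot.comp (by fun_prop)).aestronglyMeasurable (.of_forall fun s => ?_)
  have hre : ((x + I * s) / 2).re = x / 2 := by simp
  exact hre ▸ norm_cot_le_inv_abs_sin_re (hre ▸ hx)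

/-- the contour-integral representation of the standard planar heat kernel,
where the contour `C_{θ,ψ}` is the union of a small positively oriented circle centered at
`α = ψ` and the two vertical lines `Re α = θ−π` (traversed upward) and `Re α = θ+π`
(traversed downward); in particular all three integrals converge absolutely. -/
theorem stmt_1 (t r ρ θ ψ δ : ℝ) (ht : 0 < t) (hr : 0 < r) (hρ : 0 < ρ)
    (hθψ : |θ - ψ| < Real.pi) (hδ : 0 < δ) (hδ' : δ < Real.pi - |θ - ψ|) :
    CircleIntegrable
      (fun α : ℂ =>
        Complex.exp ((r : ℂ) * (ρ : ℂ) * Complex.cos (α - (θ : ℂ)) / (2 * (t : ℂ))) *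
          Complex.cot ((α - (ψ : ℂ)) / 2)) (ψ : ℂ) δ ∧
    Integrable (fun s : ℝ =>
      Complex.exp ((r : ℂ) * (ρ : ℂ) *
          Complex.cos (((θ : ℂ) - (Real.pi : ℂ) + Complex.I * (s : ℂ)) - (θ : ℂ)) /
            (2 * (t : ℂ))) *
        Complex.cot ((((θ : ℂ) - (Real.pi : ℂ) + Complex.I * (s : ℂ)) - (ψ : ℂ)) / 2)) ∧
    Integrable (fun s : ℝ =>
      Complex.exp ((r : ℂ) * (ρ : ℂ) *
          Complex.cos (((θ : ℂ) + (Real.pi : ℂ) + Complex.I * (s : ℂ)) - (θ : ℂ)) /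
            (2 * (t : ℂ))) *
        Complex.cot ((((θ : ℂ) + (Real.pi : ℂ) + Complex.I * (s : ℂ)) - (ψ : ℂ)) / 2)) ∧
    (1 / (4 * (Real.pi : ℂ) * (t : ℂ))) *
        Complex.exp (-((r : ℂ) ^ 2 + (ρ : ℂ) ^ 2 -
            2 * (r : ℂ) * (ρ : ℂ) * ((Real.cos (θ - ψ) : ℝ) : ℂ)) / (4 * (t : ℂ))) =
      (1 / (16 * (Real.pi : ℂ) ^ 2 * Complex.I * (t : ℂ))) *
        Complex.exp (-((r : ℂ) ^ 2 + (ρ : ℂ) ^ 2) / (4 * (t : ℂ))) *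
        ((∮ α in C((ψ : ℂ), δ),
            Complex.exp ((r : ℂ) * (ρ : ℂ) * Complex.cos (α - (θ : ℂ)) / (2 * (t : ℂ))) *
              Complex.cot ((α - (ψ : ℂ)) / 2)) +
          Complex.I * (∫ s : ℝ,
            Complex.exp ((r : ℂ) * (ρ : ℂ) *
                Complex.cos (((θ : ℂ) - (Real.pi : ℂ) + Complex.I * (s : ℂ)) - (θ : ℂ)) /
                  (2 * (t : ℂ))) *
              Complex.cot ((((θ : ℂ) - (Real.pi : ℂ) + Complex.I * (s : ℂ)) - (ψ : ℂ)) / 2)) -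
          Complex.I * (∫ s : ℝ,
            Complex.exp ((r : ℂ) * (ρ : ℂ) *
                Complex.cos (((θ : ℂ) + (Real.pi : ℂ) + Complex.I * (s : ℂ)) - (θ : ℂ)) /
                  (2 * (t : ℂ))) *
              Complex.cot ((((θ : ℂ) + (Real.pi : ℂ) + Complex.I * (s : ℂ)) - (ψ : ℂ)) / 2))) := by
  obtain ⟨hθψ₁, hθψ₂⟩ := abs_lt.1 hθψ
  have hδπ : δ < 2 * π := by linarith [abs_nonneg (θ - ψ), Real.pi_pos]
  have hsin : Real.sin ((θ - π - ψ) / 2) ≠ 0 :=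
    (Real.sin_neg_of_neg_of_neg_pi_lt (by linarith) (by linarith)).ne
  set F : ℂ → ℂ := fun α => cexp (r * ρ * cos (α - θ) / (2 * t)) * cot ((α - ψ) / 2) with hF
  have hper : Function.Periodic F (2 * π) :=
    ((cos_periodic.sub_const (θ : ℂ)).comp fun w => cexp (r * ρ * w / (2 * t))).mul
      (mul_comm (π : ℂ) 2 ▸ (cot_periodic.div_const 2).sub_const (ψ : ℂ))
  have hlines : (fun s : ℝ => F (θ + π + I * s)) = fun s : ℝ => F (θ - π + I * s) :=
    funext fun s => by rw [← hper (θ - π + I * s)]; congr 1; ring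
  have hline : Integrable fun s : ℝ => F (θ - π + I * s) := by
    convert integrable_cexp_neg_mul_cosh_mul_cot_half (a := r * ρ / (2 * t)) (by positivity) hsin
      using 2 with s
    have hcos : cos ((θ : ℂ) - π + I * s - θ) = -cosh s := by
      rw [show (θ : ℂ) - π + I * s - θ = s * I - π by ring, cos_sub_pi, cos_mul_I]
    simp only [hF, hcos]
    congr 2 <;> push_cast <;> ring
  have hg : Differentiable ℂ fun α : ℂ => cexp (r * ρ * cos (α - θ) / (2 * t)) := by fun_prop
  change CircleIntegrable F ψ δ ∧ Integrable (fun s : ℝ => F (θ - π + I * s)) ∧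
    Integrable (fun s : ℝ => F (θ + π + I * s)) ∧ _ = _ * _ * ((∮ α in C(ψ, δ), F α) +
      I * (∫ s : ℝ, F (θ - π + I * s)) - I * ∫ s : ℝ, F (θ + π + I * s))
  refine ⟨circleIntegrable_mul_cot_half_sub hg.differentiableOn hδ hδπ, hline, hlines ▸ hline, ?_⟩
  rw [hlines, add_sub_cancel_right, circleIntegral_mul_cot_half_sub hg.differentiableOn hδ hδπ,
    mul_comm (4 * π * I : ℂ), ← mul_assoc, mul_assoc (1 / _ : ℂ), ← exp_add, ← cos_neg, neg_sub]
  push_cast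
  field_simp
  ring_nf
end

section
/- Let t>0, r>0, ρ>0 and θ,ψ∈ℝ with |θ−ψ|<π, and let c>0. Then the Carslaw heat kernel with β=2π coincides with the standard planar heat kernel: (1/(16π²it))·e^{−(r²+ρ²)/(4t)}·∫_{A_θ(c)} e^{rρcos(α−θ)/(2t)}·cot((α−ψ)/2) dα = (1/(4πt))·e^{−(r²+ρ²−2rρcos(θ−ψ))/(4t)}. -/
open MeasureTheory

/-- The integrand of the Carslaw heat kernel on the cone of angle `β`:
`α ↦ e^{rρ cos(α−θ)/(2t)} · cot(π(α−ψ)/β)`. -/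
noncomputable def carslawF (β t r ρ θ ψ : ℝ) (α : ℂ) : ℂ :=
  Complex.exp ((r : ℂ) * (ρ : ℂ) * Complex.cos (α - (θ : ℂ)) / (2 * (t : ℂ))) *
    Complex.cot ((Real.pi : ℂ) * (α - (ψ : ℂ)) / (β : ℂ))

/-- The integral of `f : ℂ → ℂ` over the Carslaw contour `A_θ(c)`.  The upper piece runs
from `θ+π+i∞` down to `θ+π+ic`, horizontally to `θ−π+ic`, then up to `θ−π+i∞`; the lower
piece runs from `θ−π−i∞` up to `θ−π−ic`, horizontally to `θ+π−ic`, then down to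
`θ+π−i∞`. -/
noncomputable def AInt (f : ℂ → ℂ) (θ c : ℝ) : ℂ :=
  (-Complex.I) * (∫ s in Set.Ioi c, f (((θ + Real.pi : ℝ) : ℂ) + (s : ℂ) * Complex.I))
    - (∫ x in (θ - Real.pi)..(θ + Real.pi), f ((x : ℂ) + (c : ℂ) * Complex.I))
    + Complex.I * (∫ s in Set.Ioi c, f (((θ - Real.pi : ℝ) : ℂ) + (s : ℂ) * Complex.I))
    + Complex.I * (∫ s in Set.Iio (-c), f (((θ - Real.pi : ℝ) : ℂ) + (s : ℂ) * Complex.I))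
    + (∫ x in (θ - Real.pi)..(θ + Real.pi), f ((x : ℂ) - (c : ℂ) * Complex.I))
    - Complex.I * (∫ s in Set.Iio (-c), f (((θ + Real.pi : ℝ) : ℂ) + (s : ℂ) * Complex.I))

/-- The Carslaw heat kernel `H_β(r,θ,ρ,ψ;t)` on the cone of angle `β`:
`H_β = (8πβit)⁻¹ e^{−(r²+ρ²)/(4t)} ∫_{A_θ(c)} e^{rρcos(α−θ)/(2t)} cot(π(α−ψ)/β) dα`
(the value of the contour integral is independent of the height `c > 0`; we take `c = 1`). -/
noncomputable def carslawH (β t r θ ρ ψ : ℝ) : ℂ :=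
  (1 / (8 * (Real.pi : ℂ) * (β : ℂ) * Complex.I * (t : ℂ))) *
    Complex.exp (-((r : ℂ) ^ 2 + (ρ : ℂ) ^ 2) / (4 * (t : ℂ))) *
    AInt (carslawF β t r ρ θ ψ) θ 1

/-!
Write `g α = e^{rρ cos(α−θ)/(2t)}`. The integrand `g α · cot((α−ψ)/2)` is `2π`-periodic, so the
vertical rays of `A_θ(c)` cancel in pairs and only the two horizontal segments over one period
remain. Subtracting the pole part `g ψ · cot((α−ψ)/2)` leaves a function holomorphic on the
rectangle `[θ−π, θ+π] × [−c, c]` whose vertical sides again cancel, so by Cauchy's theorem its two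
horizontal integrals agree. The pole part is integrated explicitly: `cot(w/2) = −i − 2i u/(1−u)`
with `u = e^{iw}`, so for `Im w > 0` it has the primitive `−iw + 2 log(1 − e^{iw})`, which gains
`−2πi` over a period (and `+2πi` for `Im w < 0`, by oddness). Hence the contour integral is `4πi g(ψ)`, which the prefactor turns into the planar heat
kernel.
-/

open Complex Set
open scoped Real Interval

theorem Complex.cot_periodic_s3 : Function.Periodic cot π := fun z => by
  simp only [cot_eq_cos_div_sin, cos_antiperiodic z, sin_antiperiodic z, neg_div_neg_eq]

theorem periodic_cot_half_sub (ψ : ℂ) : Function.Periodic (fun z => cot ((z - ψ) / 2)) (2 * π) :=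
  fun z => by
    simpa only [show (z + 2 * π - ψ) / 2 = (z - ψ) / 2 + π by ring] using cot_periodic_s3 _

theorem Complex.sin_ne_zero_of_im_ne_zero {w : ℂ} (hw : w.im ≠ 0) : sin w ≠ 0 := by
  rw [Ne, sin_eq_zero_iff]
  rintro ⟨k, rfl⟩
  simp at hw

theorem continuous_cot_half_add {z : ℂ} (hz : z.im ≠ 0) :
    Continuous fun x : ℝ => cot ((x + z) / 2) := by
  simp only [cot_eq_cos_div_sin]
  refine Continuous.div (by fun_prop) (by fun_prop) fun x => sin_ne_zero_of_im_ne_zero ?_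
  simpa using hz

theorem hasDerivAt_primitive_cot_half_add {z : ℂ} (hz : 0 < z.im) (x : ℝ) :
    HasDerivAt (fun x : ℝ => -I * x + 2 * log (1 - exp ((x + z) * I)))
      (cot ((x + z) / 2)) x := by
  set u := exp ((x + z) * I) with hu_def
  have hu : ‖u‖ < 1 := by
    simp [u, norm_exp, hz]
  have hslit : 1 - u ∈ slitPlane := by
    simpa [sub_eq_add_neg] using mem_slitPlane_of_norm_lt_one (z := -u) (by simpa using hu)
  have hu1 : 1 - u ≠ 0 := slitPlane_ne_zero hslit
  have hexp : HasDerivAt (fun x : ℝ => exp ((x + z) * I)) (u * I) x := by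
    have := ((hasDerivAt_id (x : ℂ)).add_const z |>.mul_const I).cexp.comp_ofReal
    simpa using this
  have := ((hasDerivAt_id (x : ℂ)).comp_ofReal.const_mul (-I)).add
    (((hasDerivAt_log hslit).comp x (hexp.const_sub 1)).const_mul 2)
  have hcot : cot ((x + z) / 2) = -I * 1 + 2 * ((1 - u)⁻¹ * -(u * I)) := by
    rw [cot_eq_exp_ratio, show 2 * I * ((x + z) / 2) = (x + z) * I by ring, ← hu_def]
    field_simp
    linear_combination (1 + u) * I_sq
  rw [hcot]
  exact this

theorem integral_cot_half_add_of_im_pos {z : ℂ} (hz : 0 < z.im) (a : ℝ) :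
    ∫ x in a..a + 2 * π, cot ((x + z) / 2) = -2 * π * I := by
  rw [intervalIntegral.integral_eq_sub_of_hasDerivAt
    (fun x _ => hasDerivAt_primitive_cot_half_add hz x)
    ((continuous_cot_half_add hz.ne').intervalIntegrable _ _)]
  have hper : exp (((a + 2 * π : ℝ) + z) * I) = exp ((a + z) * I) := by
    push_cast
    simpa only [add_right_comm] using exp_mul_I_periodic ((a : ℂ) + z)
  rw [hper]
  push_cast
  ring

theorem integral_cot_half_add_of_im_neg {z : ℂ} (hz : z.im < 0) (a : ℝ) :
    ∫ x in a..a + 2 * π, cot ((x + z) / 2) = 2 * π * I := by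
  have hodd : ∀ x : ℝ, cot ((x + z) / 2) = -cot (((-x : ℝ) + -z) / 2) := by
    intro x
    rw [show ((-x : ℝ) + -z) / 2 = -((x + z) / 2) by push_cast; ring]
    simp only [cot_eq_cos_div_sin, cos_neg, sin_neg, div_neg, neg_neg]
  simp_rw [hodd]
  rw [intervalIntegral.integral_neg,
    intervalIntegral.integral_comp_neg (fun x : ℝ => cot ((x + -z) / 2)),
    show -a = -(a + 2 * π) + 2 * π by ring, integral_cot_half_add_of_im_pos (by simpa using hz)]
  ring

theorem integral_horizontal_eq_of_differentiableOn_rect {E : Type*} [NormedAddCommGroup E]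
    [NormedSpace ℂ E] [CompleteSpace E] {H : ℂ → E} {a b c₁ c₂ : ℝ}
    (hH : DifferentiableOn ℂ H ([[a, b]] ×ℂ [[c₁, c₂]]))
    (hside : ∀ y : ℝ, H (b + y * I) = H (a + y * I)) :
    ∫ x in a..b, H (x + c₁ * I) = ∫ x in a..b, H (x + c₂ * I) := by
  have := integral_boundary_rect_eq_zero_of_differentiableOn H (a + c₁ * I) (b + c₂ * I)
    (by simpa using hH)
  simp only [add_re, ofReal_re, mul_re, I_re, mul_zero, ofReal_im, I_im, mul_one, sub_self,
    add_zero, add_im, mul_im, zero_add, hside] at this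
  exact sub_eq_zero.mp (by simpa using this)

theorem dslope_sin_zero_ne_zero {w : ℂ} (hw : |w.re| < π) : dslope sin 0 w ≠ 0 := by
  rcases eq_or_ne w 0 with rfl | hw0
  · simp [dslope_same, Complex.deriv_sin]
  rw [dslope_of_ne _ hw0, slope_def_field, sin_zero, sub_zero, sub_zero]
  refine div_ne_zero ?_ hw0
  rw [Ne, sin_eq_zero_iff]
  rintro ⟨k, rfl⟩
  have hk : |(k : ℝ)| * π < 1 * π := by
    simpa [abs_mul, abs_of_pos Real.pi_pos] using hw
  have hk0 : k = 0 :=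
    Int.abs_lt_one_iff.mp (by exact_mod_cast lt_of_mul_lt_mul_right hk Real.pi_pos.le)
  simp [hk0] at hw0

-- `(g z - g ψ) * cot ((z - ψ) / 2)`, written through difference quotients so that it is
-- holomorphic across `z = ψ`.
noncomputable def removableCotHalf (g : ℂ → ℂ) (ψ z : ℂ) : ℂ :=
  dslope g ψ z * (2 * cos ((z - ψ) / 2) / dslope sin 0 ((z - ψ) / 2))

theorem removableCotHalf_of_ne {g : ℂ → ℂ} {ψ z : ℂ} (hz : z ≠ ψ) :
    removableCotHalf g ψ z = (g z - g ψ) * cot ((z - ψ) / 2) := by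
  have hw : (z - ψ) / 2 ≠ 0 := div_ne_zero (sub_ne_zero.mpr hz) two_ne_zero
  rw [removableCotHalf, dslope_of_ne _ hz, dslope_of_ne _ hw, slope_def_field, slope_def_field,
    cot_eq_cos_div_sin, sin_zero, sub_zero, sub_zero]
  rcases eq_or_ne (sin ((z - ψ) / 2)) 0 with hs | hs
  · simp [hs]
  · have : z - ψ ≠ 0 := sub_ne_zero.mpr hz
    field_simp

theorem differentiableAt_removableCotHalf {g : ℂ → ℂ} (hg : Differentiable ℂ g) {ψ z : ℂ}
    (hz : |(z - ψ).re| < 2 * π) : DifferentiableAt ℂ (removableCotHalf g ψ) z := by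
  have hdslope : ∀ {f : ℂ → ℂ} {c : ℂ}, Differentiable ℂ f → Differentiable ℂ (dslope f c) :=
    fun hf => differentiableOn_univ.mp
      ((differentiableOn_dslope Filter.univ_mem).mpr hf.differentiableOn)
  have hne : dslope sin 0 ((z - ψ) / 2) ≠ 0 := dslope_sin_zero_ne_zero (by
    rw [div_ofNat_re, abs_div, abs_two]; linarith)
  unfold removableCotHalf
  refine (hdslope hg z).mul (DifferentiableAt.div (by fun_prop) ?_ hne)
  exact (hdslope differentiable_sin _).comp z (by fun_prop)

theorem integral_mul_cot_half_sub_integral_mul_cot_half {g : ℂ → ℂ} (hg : Differentiable ℂ g)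
    (hper : Function.Periodic g (2 * π)) {a ψ c : ℝ} (hψ : ψ ∈ Ioo a (a + 2 * π)) (hc : 0 < c) :
    (∫ x in a..a + 2 * π, g (x - c * I) * cot ((x - c * I - ψ) / 2)) -
      ∫ x in a..a + 2 * π, g (x + c * I) * cot ((x + c * I - ψ) / 2) = 4 * π * I * g ψ := by
  have hrect : DifferentiableOn ℂ (removableCotHalf g ψ) ([[a, a + 2 * π]] ×ℂ [[-c, c]]) := by
    intro z hz
    rw [mem_reProdIm, uIcc_of_le (by linarith [Real.pi_pos])] at hz
    refine (differentiableAt_removableCotHalf hg ?_).differentiableWithinAt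
    rw [sub_re, ofReal_re, abs_lt]
    constructor <;> linarith [hz.1.1, hz.1.2, hψ.1, hψ.2]
  have hside : ∀ y : ℝ, removableCotHalf g ψ ((a + 2 * π : ℝ) + y * I) =
      removableCotHalf g ψ (a + y * I) := by
    intro y
    have hne : ∀ e : ℝ, e ≠ ψ → (e : ℂ) + y * I ≠ ψ := fun e he h => he (by
      simpa using congrArg re h)
    rw [removableCotHalf_of_ne (hne _ (by linarith [hψ.2])),
      removableCotHalf_of_ne (hne _ (by linarith [hψ.1]))]
    push_cast
    rw [add_right_comm, hper]
    exact congrArg _ (periodic_cot_half_sub (ψ : ℂ) _)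
  have hsplit : ∀ z : ℂ, z.im ≠ 0 →
      ∫ x in a..a + 2 * π, removableCotHalf g ψ (x + z) =
        (∫ x in a..a + 2 * π, g (x + z) * cot ((x + z - ψ) / 2)) -
          g ψ * ∫ x in a..a + 2 * π, cot ((x + (z - ψ)) / 2) := by
    intro z hz
    have hcot := continuous_cot_half_add (z := z - ψ) (by simpa using hz)
    simp only [← add_sub_assoc] at hcot ⊢
    have hf : Continuous fun x : ℝ => g (x + z) * cot ((x + z - ψ) / 2) :=
      (hg.continuous.comp (continuous_ofReal.add continuous_const)).mul hcot
    have hpole : Continuous fun x : ℝ => g ψ * cot ((x + z - ψ) / 2) := continuous_const.mul hcot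
    rw [← intervalIntegral.integral_const_mul, ← intervalIntegral.integral_sub
      (hf.intervalIntegrable _ _) (hpole.intervalIntegrable _ _)]
    refine intervalIntegral.integral_congr fun x _ => ?_
    have hxz : (x : ℂ) + z ≠ ψ := fun h => hz (by simpa using congrArg im h)
    simp only [removableCotHalf_of_ne hxz, sub_mul]
  have hrect_eq := integral_horizontal_eq_of_differentiableOn_rect hrect hside
  rw [ofReal_neg, neg_mul, hsplit _ (by simp [hc.ne']), hsplit _ (by simp [hc.ne']),
    integral_cot_half_add_of_im_neg (by simp [hc]),
    integral_cot_half_add_of_im_pos (by simp [hc])] at hrect_eq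
  simp only [sub_eq_add_neg (_ : ℂ) ((c : ℂ) * I)]
  linear_combination hrect_eq

theorem AInt_eq_of_periodic {f : ℂ → ℂ} (hf : Function.Periodic f (2 * π)) (θ c : ℝ) :
    AInt f θ c = (∫ x in (θ - π)..(θ + π), f (x - c * I)) -
      ∫ x in (θ - π)..(θ + π), f (x + c * I) := by
  have hvert : ∀ s : ℝ, f ((θ + π : ℝ) + s * I) = f ((θ - π : ℝ) + s * I) := fun s => by
    rw [← hf ((θ - π : ℝ) + s * I)]
    push_cast
    ring_nf
  simp only [AInt, hvert]
  ring

theorem stmt_3_general (t r ρ θ ψ c : ℝ)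
    (hθψ : |θ - ψ| < Real.pi) (hc : 0 < c) :
    (1 / (16 * (Real.pi : ℂ) ^ 2 * Complex.I * (t : ℂ))) *
        Complex.exp (-((r : ℂ) ^ 2 + (ρ : ℂ) ^ 2) / (4 * (t : ℂ))) *
        AInt (fun α : ℂ =>
          Complex.exp ((r : ℂ) * (ρ : ℂ) * Complex.cos (α - (θ : ℂ)) / (2 * (t : ℂ))) *
            Complex.cot ((α - (ψ : ℂ)) / 2)) θ c =
      (1 / (4 * (Real.pi : ℂ) * (t : ℂ))) *
        Complex.exp (-((r : ℂ) ^ 2 + (ρ : ℂ) ^ 2 -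
            2 * (r : ℂ) * (ρ : ℂ) * ((Real.cos (θ - ψ) : ℝ) : ℂ)) / (4 * (t : ℂ))) := by
  let g : ℂ → ℂ := fun z => exp (r * ρ * cos (z - θ) / (2 * t))
  have hg : Differentiable ℂ g := by fun_prop
  have hgper : Function.Periodic g (2 * π) := fun z => by
    simp only [g, add_sub_right_comm, cos_periodic _]
  have hψ : ψ ∈ Ioo (θ - π) (θ - π + 2 * π) := by
    constructor <;> linarith [abs_lt.mp hθψ]
  have hAInt : AInt (fun α => g α * cot ((α - ψ) / 2)) θ c = 4 * π * I * g ψ := by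
    rw [AInt_eq_of_periodic (f := fun α => g α * cot ((α - ψ) / 2))
      (hgper.mul (periodic_cot_half_sub ψ)), show θ + π = θ - π + 2 * π by ring]
    exact integral_mul_cot_half_sub_integral_mul_cot_half hg hgper hψ hc
  have hexp : exp (-(r ^ 2 + ρ ^ 2) / (4 * t)) * g ψ =
      exp (-(r ^ 2 + ρ ^ 2 - 2 * r * ρ * (Real.cos (θ - ψ) : ℂ)) / (4 * t)) := by
    rw [← exp_add, ofReal_cos, ← cos_neg]
    push_cast
    ring_nf
  have hcoef : (1 : ℂ) / (16 * π ^ 2 * I * t) * (4 * π * I) = 1 / (4 * π * t) := by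
    have h4πI : (4 * π * I : ℂ) ≠ 0 := by simp [Real.pi_ne_zero]
    rw [show (16 : ℂ) * π ^ 2 * I * t = 4 * π * I * (4 * π * t) by ring, one_div, one_div, mul_inv,
      mul_right_comm, inv_mul_cancel₀ h4πI, one_mul]
  change _ * AInt (fun α => g α * cot ((α - ψ) / 2)) θ c = _
  rw [hAInt, ← hexp, ← hcoef]
  ring

/-- for `β = 2π` (so that the cotangent factor is `cot((α−ψ)/2)` and the
prefactor is `(16π²it)⁻¹`), the Carslaw contour integral over `A_θ(c)` reproduces the
standard planar heat kernel, for any height `c > 0`, provided `|θ−ψ| < π`. -/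
theorem stmt_3 (t r ρ θ ψ c : ℝ) (ht : 0 < t) (hr : 0 < r) (hρ : 0 < ρ)
    (hθψ : |θ - ψ| < Real.pi) (hc : 0 < c) :
    (1 / (16 * (Real.pi : ℂ) ^ 2 * Complex.I * (t : ℂ))) *
        Complex.exp (-((r : ℂ) ^ 2 + (ρ : ℂ) ^ 2) / (4 * (t : ℂ))) *
        AInt (fun α : ℂ =>
          Complex.exp ((r : ℂ) * (ρ : ℂ) * Complex.cos (α - (θ : ℂ)) / (2 * (t : ℂ))) *
            Complex.cot ((α - (ψ : ℂ)) / 2)) θ c =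
      (1 / (4 * (Real.pi : ℂ) * (t : ℂ))) *
        Complex.exp (-((r : ℂ) ^ 2 + (ρ : ℂ) ^ 2 -
            2 * (r : ℂ) * (ρ : ℂ) * ((Real.cos (θ - ψ) : ℝ) : ℂ)) / (4 * (t : ℂ))) :=
  stmt_3_general t r ρ θ ψ c hθψ hc
end

section
/- Let b be a real number with b>−1, let U⊆ℂ be an open neighborhood of 0, and let g:U→ℂ be holomorphic with g(0)≠0. Then there exist an open neighborhood V⊆U of 0 and an injective holomorphic function w:V→ℂ with w(0)=0 and w′(0)≠0 such that |w(z)|^b·|w′(z)| = |g(z)|·|z|^b for all z∈V∖{0}. (Consequently, in the new holomorphic coordinate x=w(z) the flat conformal metric |g(z)|²|z|^{2b}|dz|² takes the normal form |x|^{2b}|dx|².) -/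
/-!
Formally, `w^{b+1}` should be a primitive of `(b+1) g(z) z^b`, i.e. `w = z P^{1/(b+1)}` with
`z^{b+1} P(z) = (b+1) ∫₀^z g(ζ) ζ^b dζ`, so `P(z) = (b+1) ∫₀¹ t^b g(tz) dt`. This `P` is
holomorphic and solves the Euler equation `z P' = (b+1)(g - P)`, whence `P(0) = g(0) ≠ 0`. Taking
`u = P^{1/(b+1)}` through a local logarithm of `P` and `w = z u`, the Euler equation gives
`w' = u g / P`, hence `|w|^b |w'| = |z|^b |u|^{b+1} |g| / |P| = |g| |z|^b`. Since
`w'(0) = u(0) ≠ 0`, the inverse function theorem makes `w` injective near `0`.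
-/

open MeasureTheory Metric Set Filter Topology Complex

noncomputable def radialAverage (b : ℝ) (g : ℂ → ℂ) (z : ℂ) : ℂ :=
  ∫ t in (0 : ℝ)..1, (t ^ b : ℝ) • g (t * z)

section RadialAverage

variable {b r : ℝ} {g : ℂ → ℂ} {U : Set ℂ} {z : ℂ}

lemma ofReal_mul_mem_closedBall {t : ℝ} (ht : t ∈ Icc (0 : ℝ) 1) (hz : z ∈ closedBall (0 : ℂ) r) :
    (t : ℂ) * z ∈ closedBall (0 : ℂ) r := by
  rw [mem_closedBall_zero_iff, norm_mul, norm_real, Real.norm_of_nonneg ht.1] at *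
  nlinarith [norm_nonneg z, ht.2]

lemma intervalIntegrable_rpow_smul_comp_ofReal_mul (hb : -1 < b)
    (hg : ContinuousOn g (closedBall 0 r)) (hz : z ∈ closedBall (0 : ℂ) r) :
    IntervalIntegrable (fun t : ℝ => (t ^ b : ℝ) • g (t * z)) volume 0 1 := by
  refine (intervalIntegral.intervalIntegrable_rpow' hb).smul_continuousOn
    (hg.comp (by fun_prop) fun t ht => ?_)
  rw [uIcc_of_le zero_le_one] at ht
  exact ofReal_mul_mem_closedBall ht hz

lemma hasDerivAt_radialAverage (hb : -1 < b) (hU : IsOpen U) (hg : DifferentiableOn ℂ g U)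
    (hrU : closedBall (0 : ℂ) r ⊆ U) (hz : z ∈ ball (0 : ℂ) r) :
    HasDerivAt (radialAverage b g) (radialAverage (b + 1) (deriv g) z) z := by
  have hb' : -1 < b + 1 := by linarith
  have hgc : ContinuousOn g (closedBall 0 r) := hg.continuousOn.mono hrU
  have hg'c : ContinuousOn (deriv g) (closedBall 0 r) := (hg.deriv hU).continuousOn.mono hrU
  obtain ⟨M, hM⟩ := (isCompact_closedBall (0 : ℂ) r).exists_bound_of_continuousOn hg'c
  have hs : closedBall (0 : ℂ) r ∈ 𝓝 z :=
    mem_of_superset (isOpen_ball.mem_nhds hz) ball_subset_closedBall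
  have hint : ∀ x ∈ closedBall (0 : ℂ) r,
      IntervalIntegrable (fun t : ℝ => (t ^ b : ℝ) • g (t * x)) volume 0 1 :=
    fun x hx => intervalIntegrable_rpow_smul_comp_ofReal_mul hb hgc hx
  refine (intervalIntegral.hasDerivAt_integral_of_dominated_loc_of_deriv_le
    (F := fun x (t : ℝ) => (t ^ b : ℝ) • g (t * x))
    (F' := fun x (t : ℝ) => (t ^ (b + 1) : ℝ) • deriv g (t * x)) (bound := fun _ => M)
    hs (eventually_of_mem hs fun x hx => (hint x hx).def'.aestronglyMeasurable)
    (hint z (ball_subset_closedBall hz))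
    (intervalIntegrable_rpow_smul_comp_ofReal_mul hb' hg'c
      (ball_subset_closedBall hz)).def'.aestronglyMeasurable ?_ intervalIntegrable_const ?_).2
  · refine .of_forall fun t ht x hx => ?_
    rw [uIoc_of_le zero_le_one] at ht
    rw [norm_smul, Real.norm_of_nonneg (Real.rpow_nonneg ht.1.le _)]
    have ht₁ : t ^ (b + 1) ≤ 1 := Real.rpow_le_one ht.1.le ht.2 (by linarith)
    exact (mul_le_of_le_one_left (norm_nonneg _) ht₁).trans
      (hM _ (ofReal_mul_mem_closedBall (Ioc_subset_Icc_self ht) hx))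
  · refine .of_forall fun t ht x hx => ?_
    rw [uIoc_of_le zero_le_one] at ht
    have hgx : HasDerivAt g (deriv g (t * x)) (t * x) :=
      (hg.differentiableAt (hU.mem_nhds
        (hrU (ofReal_mul_mem_closedBall (Ioc_subset_Icc_self ht) hx)))).hasDerivAt
    refine ((hgx.comp x ((hasDerivAt_id x).const_mul (t : ℂ))).const_smul (t ^ b)).congr_deriv ?_
    rw [Real.rpow_add_one ht.1.ne', real_smul, real_smul]
    push_cast
    ring

lemma radialAverage_add_mul_radialAverage_deriv (hb : -1 < b) (hU : IsOpen U)
    (hg : DifferentiableOn ℂ g U) (hrU : closedBall (0 : ℂ) r ⊆ U)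
    (hz : z ∈ closedBall (0 : ℂ) r) :
    ((b + 1 : ℝ) : ℂ) * radialAverage b g z + z * radialAverage (b + 1) (deriv g) z = g z := by
  have hb' : -1 < b + 1 := by linarith
  have hgc : ContinuousOn g (closedBall 0 r) := hg.continuousOn.mono hrU
  have hg'c : ContinuousOn (deriv g) (closedBall 0 r) := (hg.deriv hU).continuousOn.mono hrU
  have hmem : ∀ t ∈ Icc (0 : ℝ) 1, (t : ℂ) * z ∈ closedBall (0 : ℂ) r :=
    fun t ht => ofReal_mul_mem_closedBall ht hz
  have hΦ : ContinuousOn (fun t : ℝ => (t ^ (b + 1) : ℝ) • g (t * z)) (Icc 0 1) :=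
    ((Real.continuous_rpow_const (by linarith)).continuousOn).smul
      (hgc.comp (by fun_prop) hmem)
  have hΦ' : ∀ t ∈ Ioo (0 : ℝ) 1, HasDerivAt (fun t : ℝ => (t ^ (b + 1) : ℝ) • g (t * z))
      (((b + 1 : ℝ) : ℂ) * ((t ^ b : ℝ) • g (t * z))
        + z * ((t ^ (b + 1) : ℝ) • deriv g (t * z))) t := by
    intro t ht
    have hgt : HasDerivAt g (deriv g (t * z)) (t * z) :=
      (hg.differentiableAt (hU.mem_nhds (hrU (hmem t (Ioo_subset_Icc_self ht))))).hasDerivAt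
    have hrpow := Real.hasDerivAt_rpow_const (x := t) (p := b + 1) (Or.inl ht.1.ne')
    have hgt' := (hgt.comp (t : ℂ) ((hasDerivAt_id _).mul_const z)).comp_ofReal
    refine (hrpow.smul hgt').congr_deriv ?_
    simp only [Function.comp_apply, id, real_smul, add_sub_cancel_right, one_mul]
    push_cast
    ring
  have hint₁ := (intervalIntegrable_rpow_smul_comp_ofReal_mul hb hgc hz).const_mul
    ((b + 1 : ℝ) : ℂ)
  have hint₂ := (intervalIntegrable_rpow_smul_comp_ofReal_mul hb' hg'c hz).const_mul z
  have hFTC := intervalIntegral.integral_eq_sub_of_hasDerivAt_of_le zero_le_one hΦ hΦ'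
    (hint₁.add hint₂)
  rw [intervalIntegral.integral_add hint₁ hint₂, intervalIntegral.integral_const_mul,
    intervalIntegral.integral_const_mul] at hFTC
  simpa [radialAverage, Real.zero_rpow (by linarith : b + 1 ≠ 0)] using hFTC

lemma exists_hasDerivAt_and_mul_deriv_eq (hb : -1 < b) (hU : IsOpen U) (h0 : (0 : ℂ) ∈ U)
    (hg : DifferentiableOn ℂ g U) :
    ∃ P P' : ℂ → ℂ, ∀ᶠ z in 𝓝 0,
      HasDerivAt P (P' z) z ∧ z * P' z = ((b + 1 : ℝ) : ℂ) * (g z - P z) := by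
  obtain ⟨r, hr, hrU⟩ := nhds_basis_closedBall.mem_iff.1 (hU.mem_nhds h0)
  refine ⟨fun z => ((b + 1 : ℝ) : ℂ) * radialAverage b g z,
    fun z => ((b + 1 : ℝ) : ℂ) * radialAverage (b + 1) (deriv g) z, ?_⟩
  filter_upwards [ball_mem_nhds 0 hr] with z hz
  refine ⟨(hasDerivAt_radialAverage hb hU hg hrU hz).const_mul _, ?_⟩
  rw [← radialAverage_add_mul_radialAverage_deriv hb hU hg hrU (ball_subset_closedBall hz)]
  ring

end RadialAverage

lemma exists_exp_eq_and_hasDerivAt_log {f f' : ℂ → ℂ} {z₀ : ℂ}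
    (hf : ∀ᶠ z in 𝓝 z₀, HasDerivAt f (f' z) z) (hf₀ : f z₀ ≠ 0) :
    ∃ L : ℂ → ℂ, ∀ᶠ z in 𝓝 z₀, exp (L z) = f z ∧ HasDerivAt L (f' z / f z) z := by
  have hslit : ∀ᶠ z in 𝓝 z₀, f z / f z₀ ∈ slitPlane := by
    refine ((hf.self_of_nhds.continuousAt.div_const (f z₀)).eventually_mem
      (isOpen_slitPlane.mem_nhds ?_))
    simp [div_self hf₀]
  refine ⟨fun z => log (f z₀) + log (f z / f z₀), ?_⟩
  filter_upwards [hf, hslit] with z hfz hz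
  have hfz0 : f z ≠ 0 := by simpa [hf₀] using slitPlane_ne_zero hz
  constructor
  · rw [exp_add, exp_log hf₀, exp_log (slitPlane_ne_zero hz), mul_div_cancel₀ _ hf₀]
  · refine ((hfz.div_const (f z₀)).clog hz).const_add _ |>.congr_deriv ?_
    field_simp

lemma norm_mul_rpow_mul_norm_mul_div {b : ℝ} {z u g P : ℂ} (hu : u ≠ 0)
    (huP : ‖u‖ ^ (b + 1) = ‖P‖) :
    ‖z * u‖ ^ b * ‖u * g / P‖ = ‖g‖ * ‖z‖ ^ b := by
  rw [norm_mul, Real.mul_rpow (norm_nonneg _) (norm_nonneg _), norm_div, norm_mul,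
    ← huP, Real.rpow_add_one (norm_ne_zero_iff.2 hu)]
  have : ‖u‖ ^ b ≠ 0 := (Real.rpow_pos_of_pos (norm_pos_iff.2 hu) b).ne'
  field_simp

lemma norm_exp_div_ofReal_rpow {s : ℝ} (hs : s ≠ 0) (L : ℂ) :
    ‖exp (L / s)‖ ^ s = ‖exp L‖ := by
  rw [norm_exp, norm_exp, ← Real.exp_mul, div_ofReal_re, div_mul_cancel₀ _ hs]

lemma exists_isOpen_injOn_of_hasStrictDerivAt {𝕜 : Type*} [NontriviallyNormedField 𝕜]
    [CompleteSpace 𝕜] {f : 𝕜 → 𝕜} {f' a : 𝕜} (hf : HasStrictDerivAt f f' a) (hf' : f' ≠ 0)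
    {p : 𝕜 → Prop} (hp : ∀ᶠ z in 𝓝 a, p z) :
    ∃ V : Set 𝕜, IsOpen V ∧ a ∈ V ∧ InjOn f V ∧ ∀ z ∈ V, p z := by
  obtain ⟨V, hV, hVo, haV⟩ := _root_.eventually_nhds_iff.1 (hp.and (hf.eventually_left_inverse hf'))
  refine ⟨V, hVo, haV, fun x hx y hy hxy => ?_, fun z hz => (hV z hz).1⟩
  rw [← (hV x hx).2, ← (hV y hy).2, hxy]

/-- existence of a distinguished local parameter for a flat conformal metric
with a conical singularity of order `b > −1`: if `g` is holomorphic near `0` with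
`g(0) ≠ 0`, then there is an injective holomorphic change of coordinate `w` near `0` with
`w(0) = 0`, `w'(0) ≠ 0` and `|w(z)|^b |w'(z)| = |g(z)| |z|^b` for `z ≠ 0`, i.e. in the new
coordinate `x = w(z)` the metric `|g(z)|²|z|^{2b}|dz|²` becomes `|x|^{2b}|dx|²`. -/
theorem stmt_12 (b : ℝ) (hb : -1 < b) (U : Set ℂ) (hU : IsOpen U) (h0 : (0 : ℂ) ∈ U)
    (g : ℂ → ℂ) (hg : DifferentiableOn ℂ g U) (hg0 : g 0 ≠ 0) :
    ∃ V : Set ℂ, V ⊆ U ∧ IsOpen V ∧ (0 : ℂ) ∈ V ∧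
      ∃ w : ℂ → ℂ, DifferentiableOn ℂ w V ∧ Set.InjOn w V ∧ w 0 = 0 ∧ deriv w 0 ≠ 0 ∧
        ∀ z ∈ V, z ≠ 0 →
          ‖w z‖ ^ b * ‖deriv w z‖ =
            ‖g z‖ * ‖z‖ ^ b := by
  have hb₁ : ((b + 1 : ℝ) : ℂ) ≠ 0 := ofReal_ne_zero.2 (by linarith)
  obtain ⟨P, P', hP⟩ := exists_hasDerivAt_and_mul_deriv_eq hb hU h0 hg
  have hP₀ : P 0 = g 0 := by
    have h := hP.self_of_nhds.2
    rw [zero_mul, zero_eq_mul] at h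
    exact (sub_eq_zero.1 (h.resolve_left hb₁)).symm
  obtain ⟨L, hL⟩ := exists_exp_eq_and_hasDerivAt_log (hP.mono fun _ h => h.1) (hP₀ ▸ hg0)
  set u : ℂ → ℂ := fun z => exp (L z / ((b + 1 : ℝ) : ℂ))
  set w : ℂ → ℂ := fun z => z * u z
  have hw : ∀ᶠ z in 𝓝 0, HasDerivAt w (u z * g z / P z) z ∧ ‖u z‖ ^ (b + 1) = ‖P z‖ := by
    filter_upwards [hL, hP] with z ⟨hLexp, hLderiv⟩ ⟨_, hPode⟩
    have hPz : P z ≠ 0 := hLexp ▸ exp_ne_zero _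
    refine ⟨((hasDerivAt_id z).mul (hLderiv.div_const _).cexp).congr_deriv ?_,
      hLexp ▸ norm_exp_div_ofReal_rpow (by linarith) (L z)⟩
    have hgz : g z = P z + z * P' z / ((b + 1 : ℝ) : ℂ) := by
      rw [hPode]
      field_simp
      ring
    rw [hgz, id]
    field_simp
    ring
  have hw₀ : deriv w 0 ≠ 0 := by
    rw [hw.self_of_nhds.1.deriv, hP₀, mul_div_cancel_right₀ _ hg0]
    exact exp_ne_zero _
  have hwa : AnalyticAt ℂ w 0 :=
    analyticAt_iff_eventually_differentiableAt.2 (hw.mono fun z h => h.1.differentiableAt)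
  obtain ⟨V, hVo, hV₀, hinj, hV⟩ := exists_isOpen_injOn_of_hasStrictDerivAt
    hwa.hasStrictDerivAt hw₀ (hw.and (hU.mem_nhds h0))
  refine ⟨V, fun z hz => (hV z hz).2, hVo, hV₀, w,
    fun z hz => (hV z hz).1.1.differentiableAt.differentiableWithinAt, hinj, by simp [w], hw₀,
    fun z hz _ => ?_⟩
  rw [(hV z hz).1.1.deriv]
  exact norm_mul_rpow_mul_norm_mul_div (exp_ne_zero _) (hV z hz).1.2
end
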